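/- arXiv:2304.07688 — 3 statements merged into one kernel-verified Lean document; each statement's English description precedes it below -/
import Mathlib

section
/- Let φ_ρ(u,v) = uv + (ρ/2)u² if ρu + v ≥ 0, and φ_ρ(u,v) = -v²/(2ρ) otherwise, where ρ > 0. Then for every fixed u ∈ ℝ, the function v ↦ φ_ρ(u,v) is concave on ℝ. -/
/-!
Writing `w = ρu + v`, the branch taken for `w ≥ 0` is the tangent line of the concave parabola
`v ↦ -v²/(2ρ)` at `w = 0`, so both branches agree with `uv + ρu²/2 - (w⁻)²/(2ρ)`. This is an
affine function of `v` minus a nonnegative multiple of the convex function `v ↦ ((ρu + v)⁻)²`.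
-/

open Set

lemma convexOn_negPart_sq : ConvexOn ℝ univ fun t : ℝ => t⁻ ^ 2 := by
  have hneg : ConvexOn ℝ univ fun t : ℝ => t⁻ := by
    simp only [negPart_def]
    exact (concaveOn_id convex_univ).neg.sup (convexOn_const 0 convex_univ)
  exact hneg.pow (fun t _ => negPart_nonneg t) 2

lemma convexOn_negPart_add_sq (c : ℝ) : ConvexOn ℝ univ fun v : ℝ => (c + v)⁻ ^ 2 :=
  convexOn_negPart_sq.translate_right c

lemma ite_tangentLine_eq_sub_negPart_sq {ρ : ℝ} (hρ : ρ ≠ 0) (u v : ℝ) :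
    (if ρ * u + v ≥ 0 then u * v + ρ / 2 * u ^ 2 else -(v ^ 2 / (2 * ρ))) =
      u * v + ρ / 2 * u ^ 2 - (2 * ρ)⁻¹ * (ρ * u + v)⁻ ^ 2 := by
  split_ifs with h
  · simp [negPart_eq_zero.mpr h]
  · rw [negPart_eq_neg.mpr (le_of_not_ge h)]
    field_simp
    ring

theorem phi_concave_in_v (ρ : ℝ) (hρ : 0 < ρ) (u : ℝ) :
    ConcaveOn ℝ Set.univ
      (fun v : ℝ => if ρ * u + v ≥ 0 then u * v + ρ / 2 * u ^ 2 else -(v ^ 2 / (2 * ρ))) := by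
  simp only [ite_tangentLine_eq_sub_negPart_sq hρ.ne']
  have haffine : ConcaveOn ℝ univ fun v : ℝ => u * v + ρ / 2 * u ^ 2 :=
    ((LinearMap.mulLeft ℝ u).concaveOn convex_univ).add_const _
  exact haffine.sub ((convexOn_negPart_add_sq (ρ * u)).smul (by positivity))
end

section
/- Let φ_ρ(u,v) = uv + (ρ/2)u² if ρu + v ≥ 0, and φ_ρ(u,v) = -v²/(2ρ) otherwise, where ρ > 0. Then for every fixed v ∈ ℝ, the function u ↦ φ_ρ(u,v) is convex on ℝ. -/
lemma sq_max_convex : ConvexOn ℝ Set.univ (fun x : ℝ => (max x 0) ^ 2) := by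
  have hmax : ConvexOn ℝ Set.univ (fun x : ℝ => max x 0) := by
    exact (convexOn_id convex_univ).sup (convexOn_const 0 convex_univ)
  have himg : (fun x : ℝ => max x 0) '' Set.univ = Set.Ici 0 := by
    ext y
    constructor
    · rintro ⟨x, -, rfl⟩; exact Set.mem_Ici.mpr (le_max_right _ _)
    · intro hy; exact ⟨y, Set.mem_univ y, by simp [Set.mem_Ici.mp hy, max_eq_left]⟩
  have hpow : ConvexOn ℝ ((fun x : ℝ => max x 0) '' Set.univ) (fun x : ℝ => x ^ 2) := by
    rw [himg]; exact convexOn_pow 2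
  have hmono : MonotoneOn (fun x : ℝ => x ^ 2) ((fun x : ℝ => max x 0) '' Set.univ) := by
    rw [himg]
    intro a ha b hb hab
    exact pow_le_pow_left₀ ha hab 2
  exact hpow.comp hmax hmono

theorem phi_convex_in_u (ρ : ℝ) (hρ : 0 < ρ) (v : ℝ) :
    ConvexOn ℝ Set.univ
      (fun u : ℝ => if ρ * u + v ≥ 0 then u * v + ρ / 2 * u ^ 2 else -(v ^ 2 / (2 * ρ))) := by
  have key : (fun u : ℝ => if ρ * u + v ≥ 0 then u * v + ρ / 2 * u ^ 2 else -(v ^ 2 / (2 * ρ)))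
      = fun u : ℝ => (1 / (2 * ρ)) • (max (ρ * u + v) 0) ^ 2 + (-(v ^ 2 / (2 * ρ))) := by
    funext u
    by_cases h : ρ * u + v ≥ 0
    · rw [if_pos h, max_eq_left h]
      field_simp
      linear_combination (-(2*u*ρ*v + u^2*ρ^2 + v^2)) * mul_inv_cancel₀ hρ.ne'
    · rw [if_neg h, max_eq_right (le_of_not_ge (by simpa using h))]
      simp
  rw [key]
  have hcomp : ConvexOn ℝ Set.univ (fun u : ℝ => (max (ρ * u + v) 0) ^ 2) := by
    have := sq_max_convex.comp_affineMap
      (AffineMap.mk' (fun u : ℝ => ρ * u + v) (LinearMap.mul ℝ ℝ ρ) 0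
        (fun p => by simp [mul_add]))
    exact this
  exact (hcomp.smul (by positivity)).add (convexOn_const _ convex_univ)
end

section
/- Let f : ℝⁿ → ℝ^J with components f_j, and suppose λ* ∈ ℝ^J with λ* ≥ 0, x* ∈ X satisfies ⟨F(x*), x - x*⟩ + J⁻¹ f(x)ᵀλ* ≥ 0 for all x ∈ X. Suppose further that x̂ ∈ X and the vector λ̃ ∈ ℝ^J defined by λ̃ⱼ = 1 + λ*ⱼ if f_j(x̂) > 0 and λ̃ⱼ = 0 otherwise, satisfies ⟨F(x*), x̂ - x*⟩ + J⁻¹ f(x̂)ᵀ λ̃ ≤ C for a constant C. Then J⁻¹ ∑_{j=1}^J max(f_j(x̂), 0) ≤ C. -/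
open RealInnerProductSpace

/-! Testing the optimality inequality at `x̂` bounds `J⁻¹ λ*ᵀ f(x̂)` from below, and
pointwise `(λ̃ⱼ - λ*ⱼ) f_j(x̂) ≥ [f_j(x̂)]₊` because `λ*ⱼ ≥ 0`. -/

lemma max_zero_add_mul_le_ite_mul {a μ : ℝ} (hμ : 0 ≤ μ) :
    max a 0 + μ * a ≤ (if a > 0 then 1 + μ else 0) * a := by
  split_ifs with ha
  · rw [max_eq_left ha.le]
    linarith
  · rw [max_eq_right (not_lt.1 ha)]
    nlinarith

lemma sum_max_zero_le_sum_ite_mul_sub {ι : Type*} (s : Finset ι) (a μ : ι → ℝ)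
    (hμ : ∀ j ∈ s, 0 ≤ μ j) :
    ∑ j ∈ s, max (a j) 0 ≤
      ∑ j ∈ s, (if a j > 0 then 1 + μ j else 0) * a j - ∑ j ∈ s, μ j * a j := by
  rw [le_sub_iff_add_le, ← Finset.sum_add_distrib]
  exact Finset.sum_le_sum fun j hj => max_zero_add_mul_le_ite_mul (hμ j hj)

theorem infeasibility_bound_general {n J : ℕ}
    (F : EuclideanSpace ℝ (Fin n) → EuclideanSpace ℝ (Fin n))
    (f : Fin J → EuclideanSpace ℝ (Fin n) → ℝ)
    (X : Set (EuclideanSpace ℝ (Fin n)))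
    (xstar : EuclideanSpace ℝ (Fin n))
    (lamstar : Fin J → ℝ) (hlam : ∀ j, 0 ≤ lamstar j)
    (hopt : ∀ x ∈ X, 0 ≤ ⟪F xstar, x - xstar⟫ + (J : ℝ)⁻¹ * ∑ j, lamstar j * f j x)
    (xhat : EuclideanSpace ℝ (Fin n)) (hxhat : xhat ∈ X) (C : ℝ)
    (hC : ⟪F xstar, xhat - xstar⟫
        + (J : ℝ)⁻¹ * ∑ j, (if f j xhat > 0 then 1 + lamstar j else 0) * f j xhat ≤ C) :
    (J : ℝ)⁻¹ * ∑ j, max (f j xhat) 0 ≤ C := by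
  have hgap := sum_max_zero_le_sum_ite_mul_sub Finset.univ (fun j => f j xhat) lamstar
    fun j _ => hlam j
  have hlow := hopt xhat hxhat
  calc (J : ℝ)⁻¹ * ∑ j, max (f j xhat) 0
      ≤ (J : ℝ)⁻¹ * (∑ j, (if f j xhat > 0 then 1 + lamstar j else 0) * f j xhat
          - ∑ j, lamstar j * f j xhat) :=
        mul_le_mul_of_nonneg_left hgap (by positivity)
    _ ≤ C := by linarith

theorem infeasibility_bound {n J : ℕ} (hJ : 0 < J)
    (F : EuclideanSpace ℝ (Fin n) → EuclideanSpace ℝ (Fin n))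
    (f : Fin J → EuclideanSpace ℝ (Fin n) → ℝ)
    (X : Set (EuclideanSpace ℝ (Fin n)))
    (xstar : EuclideanSpace ℝ (Fin n)) (hxstar : xstar ∈ X)
    (lamstar : Fin J → ℝ) (hlam : ∀ j, 0 ≤ lamstar j)
    (hopt : ∀ x ∈ X, 0 ≤ ⟪F xstar, x - xstar⟫ + (J : ℝ)⁻¹ * ∑ j, lamstar j * f j x)
    (xhat : EuclideanSpace ℝ (Fin n)) (hxhat : xhat ∈ X) (C : ℝ)
    (hC : ⟪F xstar, xhat - xstar⟫
        + (J : ℝ)⁻¹ * ∑ j, (if f j xhat > 0 then 1 + lamstar j else 0) * f j xhat ≤ C) :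
    (J : ℝ)⁻¹ * ∑ j, max (f j xhat) 0 ≤ C :=
  infeasibility_bound_general F f X xstar lamstar hlam hopt xhat hxhat C hC
end
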